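/- (Theorem 2, decomposition into cost-sensitive binary regrets.) Let c ∈ (0, 1/2), K ≥ 2, let X be a measurable space, P a probability measure on X × {1,…,K}, and g : X → ℝ^K a measurable score function with coordinates g_1,…,g_K. Then R01c(f(·; g)) − R01c* ≤ ∑_{i=1}^K ( R^{ℓ01,i}_{1−c}(g_i) − R^{ℓ01,i,*}_{1−c} ), where for a measurable function u : X → ℝ the one-versus-rest cost-sensitive binary risk of class i is R^{ℓ01,i}_{1−c}(u) = E_{(x,y)∼P}[ c·1[y = i]·ℓ01(u(x)) + (1−c)·1[y ≠ i]·ℓ01(−u(x)) ] and R^{ℓ01,i,*}_{1−c} is its infimum over measurable u. -/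

import Mathlib

open Classical MeasureTheory

/-- The discrete σ-algebra on decisions (`none` = rejection ®). -/
instance {K : ℕ} : MeasurableSpace (Option (Fin K)) := ⊤

/-- The margin zero-one loss: `ℓ01(z) = 1` if `z ≤ 0` and `0` otherwise. -/
noncomputable def mloss01 (z : ℝ) : ℝ := if z ≤ 0 then 1 else 0

/-- The cost-sensitive surrogate loss `L_CS^φ(g, y) = c·φ(g_y) + (1−c)·∑_{y'≠y} φ(−g_{y'})`. -/
noncomputable def LCS {K : ℕ} (φ : ℝ → ℝ) (c : ℝ) (g : Fin K → ℝ) (y : Fin K) : ℝ :=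
  c * φ (g y) + (1 - c) * ∑ y' ∈ Finset.univ.erase y, φ (-(g y'))

/-- The decision rule induced by a score vector `g`: reject (`none`) if
`max_y g_y ≤ 0` or if two distinct coordinates of `g` are strictly positive,
otherwise output the unique class `y` with `g_y > 0`. -/
noncomputable def decRule {K : ℕ} (g : Fin K → ℝ) : Option (Fin K) :=
  if h : ∃! y, 0 < g y then some h.choose else none

/-- The zero-one-c loss of a decision (`none` = rejection ®) against a label `y`:
`c` for rejection, `0` for the correct class, `1` for a wrong class. -/
noncomputable def loss01c {K : ℕ} (c : ℝ) (y : Fin K) : Option (Fin K) → ℝ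
  | none => c
  | some z => if z = y then 0 else 1

/-- The zero-one-c risk of a decision rule `h` under `P`:
`R01c(h) = E_{(x,y)∼P}[ℓ01c(h(x), y)]`. -/
noncomputable def R01c {X : Type*} [MeasurableSpace X] {K : ℕ} (c : ℝ)
    (P : Measure (X × Fin K)) (h : X → Option (Fin K)) : ℝ :=
  ∫ p, loss01c c p.2 (h p.1) ∂P

/-- The Bayes zero-one-c risk: the infimum of `R01c` over measurable decision rules. -/
noncomputable def R01cStar (X : Type*) [MeasurableSpace X] (K : ℕ) (c : ℝ)
    (P : Measure (X × Fin K)) : ℝ :=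
  sInf {r : ℝ | ∃ h : X → Option (Fin K), Measurable h ∧ r = R01c c P h}

/-- The cost-sensitive surrogate risk `R_CS^φ(g) = E_{(x,y)∼P}[L_CS^φ(g(x), y)]`. -/
noncomputable def RCS {X : Type*} [MeasurableSpace X] {K : ℕ} (φ : ℝ → ℝ) (c : ℝ)
    (P : Measure (X × Fin K)) (g : X → Fin K → ℝ) : ℝ :=
  ∫ p, LCS φ c (g p.1) p.2 ∂P

/-- The infimum of the cost-sensitive surrogate risk over measurable score functions. -/
noncomputable def RCSStar (X : Type*) [MeasurableSpace X] (K : ℕ) (φ : ℝ → ℝ) (c : ℝ)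
    (P : Measure (X × Fin K)) : ℝ :=
  sInf {r : ℝ | ∃ g : X → Fin K → ℝ, Measurable g ∧ r = RCS φ c P g}

/-- The one-versus-rest cost-sensitive binary `φ`-risk of class `i`:
`R^{φ,i}_{1−c}(u) = E[c·1[y = i]·φ(u(x)) + (1−c)·1[y ≠ i]·φ(−u(x))]`. -/
noncomputable def Rbin {X : Type*} [MeasurableSpace X] {K : ℕ} (φ : ℝ → ℝ) (c : ℝ)
    (P : Measure (X × Fin K)) (i : Fin K) (u : X → ℝ) : ℝ :=
  ∫ p, (if p.2 = i then c * φ (u p.1) else (1 - c) * φ (-(u p.1))) ∂P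

/-- The infimum of the one-versus-rest cost-sensitive binary `φ`-risk of class `i`
over measurable functions. -/
noncomputable def RbinStar (X : Type*) [MeasurableSpace X] (K : ℕ) (φ : ℝ → ℝ) (c : ℝ)
    (P : Measure (X × Fin K)) (i : Fin K) : ℝ :=
  sInf {r : ℝ | ∃ u : X → ℝ, Measurable u ∧ r = Rbin φ c P i u}

/-!
The regret bound splits into `R01c (f g) ≤ ∑ i, R^i (g i)` and `∑ i, R^{i,*} ≤ R01c*`, both
consequences of pointwise facts about the losses. For a score vector `v` and label `y`, the
zero-one-c loss of the induced decision is at most the sum over `i` of the one-versus-rest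
losses of `v i`: a rejection costs `c`, paid either by a non-positive score `v y` or by a
positive wrong score (at `1 - c ≥ c`); a wrong prediction costs `1 = c + (1 - c)`, paid by both.
Conversely, every decision rule `h` is encoded by the scores `u i = ±1` (positive iff `h = i`),
for which the two sides agree exactly; hence the Bayes risk dominates the sum of the binary
Bayes risks.
-/

section Loss

lemma mloss01_nonneg (z : ℝ) : 0 ≤ mloss01 z := by
  unfold mloss01; split <;> norm_num

lemma mloss01_le_one (z : ℝ) : mloss01 z ≤ 1 := by
  unfold mloss01; split <;> norm_num

lemma mloss01_of_nonpos {z : ℝ} (h : z ≤ 0) : mloss01 z = 1 := if_pos h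

@[fun_prop]
lemma measurable_mloss01 : Measurable mloss01 :=
  Measurable.ite measurableSet_Iic measurable_const measurable_const

variable {K : ℕ} {c : ℝ}

lemma loss01c_nonneg (hc0 : 0 ≤ c) (y : Fin K) (d : Option (Fin K)) :
    0 ≤ loss01c c y d := by
  cases d with
  | none => exact hc0
  | some z => change (0 : ℝ) ≤ if z = y then 0 else 1; split <;> norm_num

/-- The integrand of `Rbin mloss01 c P i`, the one-versus-rest loss of class `i`. -/
noncomputable def ovrLoss (c : ℝ) (i y : Fin K) (z : ℝ) : ℝ :=
  if y = i then c * mloss01 z else (1 - c) * mloss01 (-z)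

lemma ovrLoss_nonneg (hc0 : 0 ≤ c) (hc1 : c ≤ 1) (i y : Fin K) (z : ℝ) : 0 ≤ ovrLoss c i y z := by
  unfold ovrLoss
  split
  · exact mul_nonneg hc0 (mloss01_nonneg _)
  · exact mul_nonneg (sub_nonneg.mpr hc1) (mloss01_nonneg _)

lemma ovrLoss_le_one (hc0 : 0 ≤ c) (hc1 : c ≤ 1) (i y : Fin K) (z : ℝ) : ovrLoss c i y z ≤ 1 := by
  unfold ovrLoss
  split
  · nlinarith [mloss01_nonneg z, mloss01_le_one z]
  · nlinarith [mloss01_nonneg (-z), mloss01_le_one (-z)]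

lemma ovrLoss_self_of_nonpos {i : Fin K} {z : ℝ} (hz : z ≤ 0) : ovrLoss c i i z = c := by
  simp [ovrLoss, mloss01_of_nonpos hz]

lemma ovrLoss_of_ne_of_pos {i y : Fin K} (hiy : y ≠ i) {z : ℝ} (hz : 0 < z) :
    ovrLoss c i y z = 1 - c := by
  simp [ovrLoss, hiy, mloss01_of_nonpos (neg_nonpos.mpr hz.le)]

lemma decRule_eq_some_iff (v : Fin K → ℝ) (z : Fin K) :
    decRule v = some z ↔ 0 < v z ∧ ∀ i, 0 < v i → i = z := by
  unfold decRule
  split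
  next h =>
    rw [Option.some.injEq]
    constructor
    · rintro rfl
      exact h.choose_spec
    · rintro ⟨hz, huniq⟩
      exact huniq _ h.choose_spec.1
  next h =>
    simp only [reduceCtorEq, false_iff]
    exact fun hz => h ⟨z, hz⟩

lemma decRule_eq_none_iff (v : Fin K → ℝ) : decRule v = none ↔ ¬ ∃! y, 0 < v y := by
  unfold decRule; split <;> simp_all

lemma loss01c_decRule_le_sum_ovrLoss (hc0 : 0 ≤ c) (hc : c ≤ 1 / 2) (v : Fin K → ℝ) (y : Fin K) :
    loss01c c y (decRule v) ≤ ∑ i, ovrLoss c i y (v i) := by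
  have hnn : ∀ i, 0 ≤ ovrLoss c i y (v i) := fun i => ovrLoss_nonneg hc0 (by linarith) i y (v i)
  have single_le : ∀ i, ovrLoss c i y (v i) ≤ ∑ j, ovrLoss c j y (v j) := fun i =>
    Finset.single_le_sum (fun j _ => hnn j) (Finset.mem_univ i)
  cases hd : decRule v with
  | none =>
    change c ≤ _
    by_cases hy : 0 < v y
    · obtain ⟨i, hi, hiy⟩ : ∃ i, 0 < v i ∧ i ≠ y := by
        by_contra! hcon
        exact (decRule_eq_none_iff v).mp hd ⟨y, hy, hcon⟩
      have := single_le i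
      rw [ovrLoss_of_ne_of_pos hiy.symm hi] at this
      linarith
    · simpa [ovrLoss_self_of_nonpos (not_lt.mp hy)] using single_le y
  | some z =>
    obtain ⟨hz, huniq⟩ := (decRule_eq_some_iff v z).mp hd
    change (if z = y then 0 else 1 : ℝ) ≤ _
    split_ifs with hzy
    · exact Finset.sum_nonneg fun i _ => hnn i
    · have hvy : v y ≤ 0 := not_lt.mp fun hvy => hzy (huniq y hvy).symm
      have hpair : ovrLoss c y y (v y) + ovrLoss c z y (v z) ≤ ∑ i, ovrLoss c i y (v i) := by
        rw [← Finset.sum_pair (f := fun i => ovrLoss c i y (v i)) (Ne.symm hzy)]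
        exact Finset.sum_le_sum_of_subset_of_nonneg (Finset.subset_univ _) fun i _ _ => hnn i
      rw [ovrLoss_self_of_nonpos hvy, ovrLoss_of_ne_of_pos (Ne.symm hzy) hz] at hpair
      linarith

def decisionScore (d : Option (Fin K)) (i : Fin K) : ℝ := if d = some i then 1 else -1

lemma ovrLoss_decisionScore (d : Option (Fin K)) (i y : Fin K) :
    ovrLoss c i y (decisionScore d i) =
      (if y = i then (if d = some i then 0 else c) else 0) +
        (if d = some i then (if y = i then 0 else 1 - c) else 0) := by
  unfold ovrLoss decisionScore
  by_cases hy : y = i <;> by_cases hd : d = some i <;> simp [hy, hd, mloss01]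

lemma loss01c_eq_sum_ovrLoss_decisionScore (d : Option (Fin K)) (y : Fin K) :
    loss01c c y d = ∑ i, ovrLoss c i y (decisionScore d i) := by
  simp only [ovrLoss_decisionScore, Finset.sum_add_distrib]
  cases d with
  | none => simp [loss01c]
  | some z =>
    by_cases hzy : z = y
    · simp [loss01c, hzy]
    · simp [loss01c, hzy, Ne.symm hzy]

end Loss

section Risk

variable {X : Type*} [MeasurableSpace X] {K : ℕ} {c : ℝ} (P : Measure (X × Fin K))

lemma Measurable.decisionScore {h : X → Option (Fin K)} (hh : Measurable h) (i : Fin K) :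
    Measurable fun x => decisionScore (h x) i :=
  Measurable.ite (hh (MeasurableSpace.measurableSet_top (s := {some i})))
    measurable_const measurable_const

lemma integrable_ovrLoss [IsFiniteMeasure P] (hc0 : 0 ≤ c) (hc1 : c ≤ 1) (i : Fin K)
    {u : X → ℝ} (hu : Measurable u) : Integrable (fun p => ovrLoss c i p.2 (u p.1)) P := by
  have hmeas : Measurable fun p : X × Fin K => ovrLoss c i p.2 (u p.1) := by
    unfold ovrLoss
    exact Measurable.ite (measurable_snd (measurableSet_singleton i)) (by fun_prop) (by fun_prop)
  refine Integrable.of_bound hmeas.aestronglyMeasurable 1 (ae_of_all _ fun p => ?_)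
  rw [Real.norm_of_nonneg (ovrLoss_nonneg hc0 hc1 _ _ _)]
  exact ovrLoss_le_one hc0 hc1 _ _ _

lemma Rbin_mloss01_nonneg (hc0 : 0 ≤ c) (hc1 : c ≤ 1) (i : Fin K) (u : X → ℝ) :
    0 ≤ Rbin mloss01 c P i u :=
  integral_nonneg fun p => ovrLoss_nonneg hc0 hc1 i p.2 (u p.1)

lemma R01c_decRule_le_sum_Rbin [IsFiniteMeasure P] (hc0 : 0 ≤ c) (hc : c ≤ 1 / 2)
    {g : X → Fin K → ℝ} (hg : Measurable g) :
    R01c c P (fun x => decRule (g x)) ≤ ∑ i, Rbin mloss01 c P i (fun x => g x i) := by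
  have hint : ∀ i, Integrable (fun p => ovrLoss c i p.2 (g p.1 i)) P := fun i =>
    integrable_ovrLoss P hc0 (by linarith) i (measurable_pi_apply i |>.comp hg)
  calc R01c c P (fun x => decRule (g x))
      ≤ ∫ p, ∑ i, ovrLoss c i p.2 (g p.1 i) ∂P :=
        integral_mono_of_nonneg (ae_of_all _ fun p => loss01c_nonneg hc0 _ _)
          (integrable_finsetSum _ fun i _ => hint i)
          (ae_of_all _ fun p => loss01c_decRule_le_sum_ovrLoss hc0 hc (g p.1) p.2)
    _ = ∑ i, Rbin mloss01 c P i (fun x => g x i) :=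
        integral_finsetSum _ fun i _ => hint i

lemma R01c_eq_sum_Rbin_decisionScore [IsFiniteMeasure P] (hc0 : 0 ≤ c) (hc1 : c ≤ 1)
    {h : X → Option (Fin K)} (hh : Measurable h) :
    R01c c P h = ∑ i, Rbin mloss01 c P i (fun x => decisionScore (h x) i) := by
  calc R01c c P h = ∫ p, ∑ i, ovrLoss c i p.2 (decisionScore (h p.1) i) ∂P := by
        simp only [R01c, loss01c_eq_sum_ovrLoss_decisionScore]
    _ = _ := integral_finsetSum _ fun i _ => integrable_ovrLoss P hc0 hc1 i (hh.decisionScore i)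

lemma sum_RbinStar_le_R01cStar [IsFiniteMeasure P] (hc0 : 0 ≤ c) (hc1 : c ≤ 1) :
    ∑ i, RbinStar X K mloss01 c P i ≤ R01cStar X K c P := by
  refine le_csInf ⟨_, fun _ => none, measurable_const, rfl⟩ ?_
  rintro r ⟨h, hh, rfl⟩
  rw [R01c_eq_sum_Rbin_decisionScore P hc0 hc1 hh]
  refine Finset.sum_le_sum fun i _ => csInf_le ?_ ⟨_, ?_, rfl⟩
  · exact ⟨0, by rintro r ⟨u, -, rfl⟩; exact Rbin_mloss01_nonneg P hc0 hc1 i u⟩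
  · exact hh.decisionScore i

end Risk

theorem stmt13_general (c : ℝ) (hc0 : 0 < c) (hc : c < 1/2) (K : ℕ)
    (X : Type*) [MeasurableSpace X] (P : Measure (X × Fin K)) [IsProbabilityMeasure P]
    (g : X → Fin K → ℝ) (hg : Measurable g) :
    R01c c P (fun x => decRule (g x)) - R01cStar X K c P ≤
      ∑ i : Fin K, (Rbin mloss01 c P i (fun x => g x i) -
        RbinStar X K mloss01 c P i) := by
  have hdec := R01c_decRule_le_sum_Rbin P hc0.le hc.le hg
  have hbayes := sum_RbinStar_le_R01cStar P hc0.le (by linarith)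
  rw [Finset.sum_sub_distrib]
  linarith

/-- (Theorem 2, decomposition into cost-sensitive binary regrets.) The zero-one-c
regret of the decision rule induced by a measurable score function `g` is bounded by
the sum over classes of the one-versus-rest cost-sensitive binary regrets with the
margin zero-one loss. -/
theorem stmt13 (c : ℝ) (hc0 : 0 < c) (hc : c < 1/2) (K : ℕ) (hK : 2 ≤ K)
    (X : Type*) [MeasurableSpace X] (P : Measure (X × Fin K)) [IsProbabilityMeasure P]
    (g : X → Fin K → ℝ) (hg : Measurable g) :
    R01c c P (fun x => decRule (g x)) - R01cStar X K c P ≤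
      ∑ i : Fin K, (Rbin mloss01 c P i (fun x => g x i) -
        RbinStar X K mloss01 c P i) :=
  stmt13_general c hc0 hc K X P g hg
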